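/- arXiv:2408.13375 — 3 statements merged into one kernel-verified Lean document; each statement's English description precedes it below -/
import Mathlib

section
/- Let R ∈ End((V ⊗ W)⊗(V ⊗ W)) be defined by R((v₁ ⊗ w₁) ⊗ (v₂ ⊗ w₂)) = ε·(v₂ ⊗ w₁) ⊗ (v₁ ⊗ w₂) with ε = ±1. Then the normalized trace of R(1⊗R)···, namely Tr(R₁R₂⋯R_{n−1})/(dim V · dim W)ⁿ, equals ε^{n−1}·(dim V)^{1−n}, where R_i acts as R on the i-th and (i+1)-st tensor factors of (V ⊗ W)^{⊗n}. -/
/-!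
Each `R_i` is `ε` times the permutation matrix of the basis permutation that exchanges the
`V`-labels of legs `i` and `i + 1`. Permutation matrices multiply like the permutations, and
the adjacent transpositions `(0 1) (1 2) ⋯ (n-2 n-1)` compose to the `n`-cycle `finRotate n`,
so `R₁ ⋯ R_{n-1}` is `ε^{n-1}` times the permutation matrix of the cyclic shift of the
`V`-labels. Its trace counts the basis vectors fixed by the shift: those whose `V`-labels are
all equal, `p * q ^ n` of them.
-/

/-- The matrix of the signed `V`-flip `R`-matrix acting on legs `i, i+1` of
`E^{⊗n}`, where `E = V ⊗ W` with `dim V = p`, `dim W = q`, realized on the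
standard basis indexed by `Fin n → Fin p × Fin q`:
`R((v₁⊗w₁)⊗(v₂⊗w₂)) = ε (v₂⊗w₁)⊗(v₁⊗w₂)` (V-components at legs `i, i+1` are
swapped, all W-components and the other V-components are fixed). -/
def Rmat (p q n : ℕ) (ε : ℂ) (i : ℕ) :
    Matrix (Fin n → Fin p × Fin q) (Fin n → Fin p × Fin q) ℂ :=
  fun f g =>
    if (∀ k : Fin n, (f k).2 = (g k).2) ∧
        (∀ k : Fin n, k.val ≠ i → k.val ≠ i + 1 → (f k).1 = (g k).1) ∧
        (∀ k l : Fin n, k.val = i → l.val = i + 1 → (f k).1 = (g l).1 ∧ (f l).1 = (g k).1)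
      then ε else 0

open Equiv

namespace Fin

variable {n : ℕ}

theorem coe_cycleRange_apply (i j : Fin n) :
    (cycleRange i j : ℕ) = if j < i then (j : ℕ) + 1 else if j = i then 0 else j := by
  split_ifs with hlt heq
  · exact coe_cycleRange_of_lt hlt
  · rw [coe_cycleRange_of_le heq.le, if_pos heq]
  · rw [cycleRange_of_gt (lt_of_le_of_ne (not_lt.mp hlt) (Ne.symm heq))]

theorem cycleRange_succ_eq_mul_swap {m : ℕ} (h : m + 1 < n) :
    cycleRange ⟨m + 1, h⟩ = cycleRange ⟨m, by omega⟩ * swap ⟨m, by omega⟩ ⟨m + 1, h⟩ := by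
  ext k
  simp only [Perm.mul_apply, coe_cycleRange_apply, swap_apply_def, Fin.lt_def, Fin.ext_iff]
  split_ifs <;> simp_all <;> omega

end Fin

namespace Equiv.Perm

variable {ι α β γ : Type*}

def onFst (s : Perm ι) : Perm (ι → α × β) where
  toFun f k := ((f (s k)).1, (f k).2)
  invFun f k := ((f (s⁻¹ k)).1, (f k).2)
  left_inv f := by ext k <;> simp
  right_inv f := by ext k <;> simp

@[simp]
theorem onFst_apply (s : Perm ι) (f : ι → α × β) (k : ι) :
    onFst s f k = ((f (s k)).1, (f k).2) := rfl

@[simp]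
theorem onFst_one : (onFst 1 : Perm (ι → α × β)) = 1 := rfl

theorem onFst_mul (s t : Perm ι) :
    (onFst (s * t) : Perm (ι → α × β)) = onFst t * onFst s := by
  ext f k <;> simp

theorem permMatrix_onFst_mul [Fintype ι] [DecidableEq ι] [Fintype α] [DecidableEq α]
    [Fintype β] [DecidableEq β] (R : Type*) [NonAssocSemiring R] (s t : Perm ι) :
    (onFst s : Perm (ι → α × β)).permMatrix R * (onFst t : Perm (ι → α × β)).permMatrix R =
      (onFst (s * t) : Perm (ι → α × β)).permMatrix R := by
  rw [onFst_mul, Matrix.permMatrix_mul]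

theorem mem_fixedPoints_onFst (s : Perm ι) (f : ι → α × β) :
    f ∈ Function.fixedPoints (onFst s) ↔ (Prod.fst ∘ f) ∘ s = Prod.fst ∘ f := by
  simp only [Function.mem_fixedPoints, Function.IsFixedPt, funext_iff, Prod.ext_iff, onFst_apply,
    Function.comp_apply, and_true]

theorem IsCycle.apply_eq_of_comp_eq [Fintype ι] [DecidableEq ι] {s : Perm ι} (hs : IsCycle s)
    (hsupp : s.support = Finset.univ) {g : ι → γ} (hg : g ∘ s = g) (x y : ι) : g x = g y := by
  have hpow : ∀ i : ℕ, g ∘ ⇑(s ^ i) = g := by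
    intro i
    induction i with
    | zero => rfl
    | succ i ih => rw [pow_succ, coe_mul, ← Function.comp_assoc, ih, hg]
  obtain ⟨i, hi⟩ := hs.exists_pow_eq (x := x) (y := y)
    (mem_support.mp (hsupp ▸ Finset.mem_univ x)) (mem_support.mp (hsupp ▸ Finset.mem_univ y))
  rw [← hi, ← Function.comp_apply (f := g), hpow]

theorem ncard_fixedPoints_onFst [Fintype ι] [DecidableEq ι] [Fintype α] [Fintype β] {s : Perm ι}
    (hs : IsCycle s) (hsupp : s.support = Finset.univ) :
    (Function.fixedPoints (onFst s : Perm (ι → α × β))).ncard =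
      Fintype.card α * Fintype.card β ^ Fintype.card ι := by
  obtain ⟨i₀, -⟩ := hs.nonempty_support
  have hfix : Function.fixedPoints (onFst s : Perm (ι → α × β)) =
      {f | ∀ k, (f k).1 = (f i₀).1} := by
    ext f
    rw [mem_fixedPoints_onFst, Set.mem_ofPred_eq]
    exact ⟨fun hf k => hs.apply_eq_of_comp_eq hsupp hf k i₀,
      fun hf => funext fun k => by simp [hf]⟩
  let e : {f : ι → α × β // ∀ k, (f k).1 = (f i₀).1} ≃ α × (ι → β) :=
    { toFun f := ((f.1 i₀).1, fun k => (f.1 k).2)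
      invFun w := ⟨fun k => (w.1, w.2 k), fun _ => rfl⟩
      left_inv f := Subtype.ext (funext fun k => Prod.ext (f.2 k).symm rfl)
      right_inv w := rfl }
  rw [hfix, ← Nat.card_coe_set_eq, Set.coe_ofPred, Nat.card_congr e]
  simp [Nat.card_eq_fintype_card]

end Equiv.Perm

open Equiv Equiv.Perm

variable {p q n : ℕ}

theorem Rmat_eq_smul_permMatrix (ε : ℂ) {i : ℕ} (hi : i + 1 < n) :
    Rmat p q n ε i = ε • (onFst (swap ⟨i, by omega⟩ ⟨i + 1, hi⟩) :
      Perm (Fin n → Fin p × Fin q)).permMatrix ℂ := by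
  ext f g
  simp only [Rmat, PEquiv.toMatrix_apply, toPEquiv_apply, Option.mem_def, Option.some.injEq,
    Matrix.smul_apply, smul_eq_mul, mul_ite, mul_one, mul_zero]
  congr 1
  set a : Fin n := ⟨i, by omega⟩
  set b : Fin n := ⟨i + 1, hi⟩
  have ha (k : Fin n) : k.val = i ↔ k = a := (Fin.ext_iff (b := a)).symm
  have hb (k : Fin n) : k.val = i + 1 ↔ k = b := (Fin.ext_iff (b := b)).symm
  simp only [ne_eq, ha, hb, funext_iff, Prod.ext_iff, onFst_apply]
  apply propext
  constructor
  · rintro ⟨hsnd, hrest, hpair⟩ k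
    obtain ⟨hfa, hfb⟩ := hpair a b rfl rfl
    refine ⟨?_, hsnd k⟩
    rcases eq_or_ne k a with rfl | hka
    · rw [swap_apply_left, hfb]
    rcases eq_or_ne k b with rfl | hkb
    · rw [swap_apply_right, hfa]
    rw [swap_apply_of_ne_of_ne hka hkb, hrest k hka hkb]
  · intro h
    refine ⟨fun k => (h k).2, fun k hka hkb => ?_, ?_⟩
    · simpa [swap_apply_of_ne_of_ne hka hkb] using (h k).1
    · rintro k l rfl rfl
      exact ⟨by simpa using (h b).1, by simpa using (h a).1⟩

theorem prod_Rmat_eq (ε : ℂ) {m : ℕ} (hm : m < n) :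
    ((List.range m).map (Rmat p q n ε)).prod =
      ε ^ m • (onFst (Fin.cycleRange ⟨m, hm⟩) : Perm (Fin n → Fin p × Fin q)).permMatrix ℂ := by
  induction m with
  | zero => simp
  | succ m ih =>
    rw [List.range_succ, List.map_append, List.prod_append, ih (by omega), List.map_singleton,
      List.prod_singleton, Rmat_eq_smul_permMatrix ε hm, smul_mul_smul_comm, permMatrix_onFst_mul,
      ← Fin.cycleRange_succ_eq_mul_swap, pow_succ]

theorem stmt5_general (p q n : ℕ) (hq : 0 < q) (hn : 2 ≤ n) (ε : ℂ) :
    Matrix.trace (((List.range (n - 1)).map (Rmat p q n ε)).prod)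
        = ε ^ (n - 1) * (p : ℂ) * (q : ℂ) ^ n ∧
      Matrix.trace (((List.range (n - 1)).map (Rmat p q n ε)).prod) / ((p : ℂ) * q) ^ n
        = ε ^ (n - 1) * ((p : ℂ) ^ (n - 1))⁻¹ := by
  obtain ⟨m, rfl⟩ : ∃ m, n = m + 2 := ⟨n - 2, by omega⟩
  have hcycle : Fin.cycleRange (⟨m + 1, by omega⟩ : Fin (m + 2)) = finRotate (m + 2) :=
    Fin.cycleRange_last (m + 1)
  have htrace : Matrix.trace (((List.range (m + 1)).map (Rmat p q (m + 2) ε)).prod)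
      = ε ^ (m + 1) * (p : ℂ) * (q : ℂ) ^ (m + 2) := by
    rw [prod_Rmat_eq ε (by omega), hcycle, Matrix.trace_smul, Matrix.trace_permutation,
      ncard_fixedPoints_onFst isCycle_finRotate support_finRotate]
    simp [mul_assoc]
  rw [show m + 2 - 1 = m + 1 from rfl, htrace]
  refine ⟨rfl, ?_⟩
  have hq' : (q : ℂ) ≠ 0 := by exact_mod_cast hq.ne'
  rcases eq_or_ne (p : ℂ) 0 with hp | hp
  · -- both sides are `0`, the right one because `0⁻¹ = 0`
    simp [hp]
  · field_simp
    ring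

/-- For the `ε`-signed `V`-flip `R`-matrix on `E ⊗ E` (`E = V ⊗ W`, `dim V = p`,
`dim W = q`), the trace of `R₁ R₂ ⋯ R_{n−1}` on `E^{⊗n}` equals `ε^{n−1} p qⁿ`;
equivalently the normalized trace equals `ε^{n−1} p^{1−n}`. -/
theorem stmt5 (p q n : ℕ) (hp : 0 < p) (hq : 0 < q) (hn : 2 ≤ n) (ε : ℂ)
    (hε : ε = 1 ∨ ε = -1) :
    Matrix.trace (((List.range (n - 1)).map (Rmat p q n ε)).prod)
        = ε ^ (n - 1) * (p : ℂ) * (q : ℂ) ^ n ∧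
      Matrix.trace (((List.range (n - 1)).map (Rmat p q n ε)).prod) / ((p : ℂ) * q) ^ n
        = ε ^ (n - 1) * ((p : ℂ) ^ (n - 1))⁻¹ :=
  stmt5_general p q n hq hn ε
end

section
/- Let X ∈ End(V ⊗ V) and Y ∈ End(W ⊗ W) be involutive solutions of the Yang-Baxter equation. Define X ⊞ Y ∈ End((V ⊕ W) ⊗ (V ⊕ W)) to act as X on V ⊗ V, as Y on W ⊗ W, and as the tensor flip on (V ⊗ W) ⊕ (W ⊗ V). Then X ⊞ Y is an involutive solution of the Yang-Baxter equation. -/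
open TensorProduct

/-- The Yang-Baxter equation on `(V ⊗ V) ⊗ V`. -/
def YangBaxter {V : Type*} [AddCommGroup V] [Module ℂ V]
    (R : V ⊗[ℂ] V →ₗ[ℂ] V ⊗[ℂ] V) : Prop :=
  (R.rTensor V) ∘ₗ
      ((TensorProduct.assoc ℂ V V V).symm.toLinearMap ∘ₗ (R.lTensor V) ∘ₗ
        (TensorProduct.assoc ℂ V V V).toLinearMap) ∘ₗ (R.rTensor V)
    = ((TensorProduct.assoc ℂ V V V).symm.toLinearMap ∘ₗ (R.lTensor V) ∘ₗ
        (TensorProduct.assoc ℂ V V V).toLinearMap) ∘ₗ (R.rTensor V) ∘ₗ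
      ((TensorProduct.assoc ℂ V V V).symm.toLinearMap ∘ₗ (R.lTensor V) ∘ₗ
        (TensorProduct.assoc ℂ V V V).toLinearMap)

/-- Left side of the Yang-Baxter equation, as a linear map. -/
noncomputable def YBL {V : Type*} [AddCommGroup V] [Module ℂ V]
    (R : V ⊗[ℂ] V →ₗ[ℂ] V ⊗[ℂ] V) : (V ⊗[ℂ] V) ⊗[ℂ] V →ₗ[ℂ] (V ⊗[ℂ] V) ⊗[ℂ] V :=
  (R.rTensor V) ∘ₗ
      ((TensorProduct.assoc ℂ V V V).symm.toLinearMap ∘ₗ (R.lTensor V) ∘ₗ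
        (TensorProduct.assoc ℂ V V V).toLinearMap) ∘ₗ (R.rTensor V)

/-- Right side of the Yang-Baxter equation, as a linear map. -/
noncomputable def YBR {V : Type*} [AddCommGroup V] [Module ℂ V]
    (R : V ⊗[ℂ] V →ₗ[ℂ] V ⊗[ℂ] V) : (V ⊗[ℂ] V) ⊗[ℂ] V →ₗ[ℂ] (V ⊗[ℂ] V) ⊗[ℂ] V :=
  ((TensorProduct.assoc ℂ V V V).symm.toLinearMap ∘ₗ (R.lTensor V) ∘ₗ
        (TensorProduct.assoc ℂ V V V).toLinearMap) ∘ₗ (R.rTensor V) ∘ₗ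
      ((TensorProduct.assoc ℂ V V V).symm.toLinearMap ∘ₗ (R.lTensor V) ∘ₗ
        (TensorProduct.assoc ℂ V V V).toLinearMap)

lemma yangBaxter_iff {V : Type*} [AddCommGroup V] [Module ℂ V]
    (R : V ⊗[ℂ] V →ₗ[ℂ] V ⊗[ℂ] V) : YangBaxter R ↔ YBL R = YBR R := Iff.rfl

lemma YBL_apply {V : Type*} [AddCommGroup V] [Module ℂ V]
    (R : V ⊗[ℂ] V →ₗ[ℂ] V ⊗[ℂ] V) (x : (V ⊗[ℂ] V) ⊗[ℂ] V) :
    YBL R x = R.rTensor V ((TensorProduct.assoc ℂ V V V).symm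
      (R.lTensor V (TensorProduct.assoc ℂ V V V (R.rTensor V x)))) := rfl

lemma YBR_apply {V : Type*} [AddCommGroup V] [Module ℂ V]
    (R : V ⊗[ℂ] V →ₗ[ℂ] V ⊗[ℂ] V) (x : (V ⊗[ℂ] V) ⊗[ℂ] V) :
    YBR R x = (TensorProduct.assoc ℂ V V V).symm
      (R.lTensor V (TensorProduct.assoc ℂ V V V (R.rTensor V
        ((TensorProduct.assoc ℂ V V V).symm
          (R.lTensor V (TensorProduct.assoc ℂ V V V x)))))) := rfl

set_option maxHeartbeats 1600000 in
/-- If `X ∈ End(V ⊗ V)` and `Y ∈ End(W ⊗ W)` are involutive solutions of the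
Yang-Baxter equation, then the box-sum `X ⊞ Y ∈ End((V ⊕ W) ⊗ (V ⊕ W))`, acting as
`X` on `V ⊗ V`, as `Y` on `W ⊗ W`, and as the tensor flip on the mixed tensors,
is an involutive solution of the Yang-Baxter equation. -/
theorem stmt6 (V W : Type*) [AddCommGroup V] [Module ℂ V] [AddCommGroup W] [Module ℂ W]
    [FiniteDimensional ℂ V] [FiniteDimensional ℂ W]
    (X : V ⊗[ℂ] V →ₗ[ℂ] V ⊗[ℂ] V) (Y : W ⊗[ℂ] W →ₗ[ℂ] W ⊗[ℂ] W)
    (hXinv : X ∘ₗ X = LinearMap.id) (hXYB : YangBaxter X)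
    (hYinv : Y ∘ₗ Y = LinearMap.id) (hYYB : YangBaxter Y)
    (Z : (V × W) ⊗[ℂ] (V × W) →ₗ[ℂ] (V × W) ⊗[ℂ] (V × W))
    (hZVV : ∀ v v' : V,
      Z ((LinearMap.inl ℂ V W v) ⊗ₜ[ℂ] (LinearMap.inl ℂ V W v'))
        = TensorProduct.map (LinearMap.inl ℂ V W) (LinearMap.inl ℂ V W) (X (v ⊗ₜ[ℂ] v')))
    (hZWW : ∀ w w' : W,
      Z ((LinearMap.inr ℂ V W w) ⊗ₜ[ℂ] (LinearMap.inr ℂ V W w'))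
        = TensorProduct.map (LinearMap.inr ℂ V W) (LinearMap.inr ℂ V W) (Y (w ⊗ₜ[ℂ] w')))
    (hZVW : ∀ (v : V) (w : W),
      Z ((LinearMap.inl ℂ V W v) ⊗ₜ[ℂ] (LinearMap.inr ℂ V W w))
        = (LinearMap.inr ℂ V W w) ⊗ₜ[ℂ] (LinearMap.inl ℂ V W v))
    (hZWV : ∀ (w : W) (v : V),
      Z ((LinearMap.inr ℂ V W w) ⊗ₜ[ℂ] (LinearMap.inl ℂ V W v))
        = (LinearMap.inl ℂ V W v) ⊗ₜ[ℂ] (LinearMap.inr ℂ V W w)) :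
    (Z ∘ₗ Z = LinearMap.id) ∧ YangBaxter Z := by
  set ι := LinearMap.inl ℂ V W with hι
  set κ := LinearMap.inr ℂ V W with hκ
  have hXX : ∀ t, X (X t) = t := fun t => by simpa using LinearMap.congr_fun hXinv t
  have hYY : ∀ t, Y (Y t) = t := fun t => by simpa using LinearMap.congr_fun hYinv t
  have hA : ∀ t, Z (TensorProduct.map ι ι t) = TensorProduct.map ι ι (X t) := by
    intro t
    induction t using TensorProduct.induction_on with
    | zero => simp
    | tmul v v' => simp [hZVV]
    | add a b ha hb => simp [ha, hb]
  have hB : ∀ t, Z (TensorProduct.map κ κ t) = TensorProduct.map κ κ (Y t) := by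
    intro t
    induction t using TensorProduct.induction_on with
    | zero => simp
    | tmul w w' => simp [hZWW]
    | add a b ha hb => simp [ha, hb]
  have hsplit : ∀ p : V × W, p = ι p.1 + κ p.2 := by
    intro p; simp [hι, hκ, Prod.ext_iff]
  constructor
  · apply TensorProduct.ext'
    intro p q
    rw [hsplit p, hsplit q]
    simp only [add_tmul, tmul_add, map_add, LinearMap.comp_apply, LinearMap.id_apply,
      hZVV, hZWW, hZVW, hZWV, hA, hB, hXX, hYY, map_tmul]
  · -- Yang-Baxter for Z
    -- intertwining with the V-embedding
    have e1 : ∀ x : (V ⊗[ℂ] V) ⊗[ℂ] V,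
        Z.rTensor (V × W) (TensorProduct.map (TensorProduct.map ι ι) ι x)
          = TensorProduct.map (TensorProduct.map ι ι) ι (X.rTensor V x) := by
      intro x
      induction x using TensorProduct.induction_on with
      | zero => simp
      | tmul t c => simp [hA]
      | add a b ha hb => simp [ha, hb]
    have e2 : ∀ x : (V ⊗[ℂ] V) ⊗[ℂ] V,
        (TensorProduct.assoc ℂ _ _ _).symm
            (Z.lTensor (V × W) (TensorProduct.assoc ℂ _ _ _
              (TensorProduct.map (TensorProduct.map ι ι) ι x)))
          = TensorProduct.map (TensorProduct.map ι ι) ι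
            ((TensorProduct.assoc ℂ V V V).symm
              (X.lTensor V (TensorProduct.assoc ℂ V V V x))) := by
      intro x
      induction x using TensorProduct.induction_on with
      | zero => simp only [LinearMap.map_zero, LinearEquiv.map_zero]
      | tmul t c =>
        induction t using TensorProduct.induction_on with
        | zero => simp only [zero_tmul, LinearMap.map_zero, LinearEquiv.map_zero]
        | tmul a b =>
          simp only [map_tmul, TensorProduct.assoc_tmul, LinearMap.lTensor_tmul, hZVV]
          generalize X (b ⊗ₜ[ℂ] c) = s
          induction s using TensorProduct.induction_on with
          | zero => simp only [LinearMap.map_zero, tmul_zero, LinearEquiv.map_zero]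
          | tmul u u' => simp
          | add s t hs ht => simp only [map_add, tmul_add, hs, ht]
        | add a b ha hb =>
          simp only [add_tmul, LinearMap.map_add, LinearEquiv.map_add, map_add] at ha hb ⊢
          rw [ha, hb]
      | add a b ha hb =>
        simp only [LinearMap.map_add, LinearEquiv.map_add, map_add] at ha hb ⊢
        rw [ha, hb]
    have f1 : ∀ x : (W ⊗[ℂ] W) ⊗[ℂ] W,
        Z.rTensor (V × W) (TensorProduct.map (TensorProduct.map κ κ) κ x)
          = TensorProduct.map (TensorProduct.map κ κ) κ (Y.rTensor W x) := by
      intro x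
      induction x using TensorProduct.induction_on with
      | zero => simp
      | tmul t c => simp [hB]
      | add a b ha hb => simp [ha, hb]
    have f2 : ∀ x : (W ⊗[ℂ] W) ⊗[ℂ] W,
        (TensorProduct.assoc ℂ _ _ _).symm
            (Z.lTensor (V × W) (TensorProduct.assoc ℂ _ _ _
              (TensorProduct.map (TensorProduct.map κ κ) κ x)))
          = TensorProduct.map (TensorProduct.map κ κ) κ
            ((TensorProduct.assoc ℂ W W W).symm
              (Y.lTensor W (TensorProduct.assoc ℂ W W W x))) := by
      intro x
      induction x using TensorProduct.induction_on with
      | zero => simp only [LinearMap.map_zero, LinearEquiv.map_zero]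
      | tmul t c =>
        induction t using TensorProduct.induction_on with
        | zero => simp only [zero_tmul, LinearMap.map_zero, LinearEquiv.map_zero]
        | tmul a b =>
          simp only [map_tmul, TensorProduct.assoc_tmul, LinearMap.lTensor_tmul, hZWW]
          generalize Y (b ⊗ₜ[ℂ] c) = s
          induction s using TensorProduct.induction_on with
          | zero => simp only [LinearMap.map_zero, tmul_zero, LinearEquiv.map_zero]
          | tmul u u' => simp
          | add s t hs ht => simp only [map_add, tmul_add, hs, ht]
        | add a b ha hb =>
          simp only [add_tmul, LinearMap.map_add, LinearEquiv.map_add, map_add] at ha hb ⊢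
          rw [ha, hb]
      | add a b ha hb =>
        simp only [LinearMap.map_add, LinearEquiv.map_add, map_add] at ha hb ⊢
        rw [ha, hb]
    have hVVV : ∀ (v v' v'' : V),
        YBL Z ((ι v ⊗ₜ[ℂ] ι v') ⊗ₜ[ℂ] ι v'') = YBR Z ((ι v ⊗ₜ[ℂ] ι v') ⊗ₜ[ℂ] ι v'') := by
      intro v v' v''
      have hy : (ι v ⊗ₜ[ℂ] ι v') ⊗ₜ[ℂ] ι v''
          = TensorProduct.map (TensorProduct.map ι ι) ι ((v ⊗ₜ[ℂ] v') ⊗ₜ[ℂ] v'') := by simp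
      rw [hy, YBL_apply, YBR_apply]
      simp only [e1, e2]
      have h := LinearMap.congr_fun hXYB ((v ⊗ₜ[ℂ] v') ⊗ₜ[ℂ] v'')
      simp only [LinearMap.comp_apply, LinearEquiv.coe_coe] at h
      exact congrArg _ h
    have hWWW : ∀ (w w' w'' : W),
        YBL Z ((κ w ⊗ₜ[ℂ] κ w') ⊗ₜ[ℂ] κ w'') = YBR Z ((κ w ⊗ₜ[ℂ] κ w') ⊗ₜ[ℂ] κ w'') := by
      intro w w' w''
      have hy : (κ w ⊗ₜ[ℂ] κ w') ⊗ₜ[ℂ] κ w''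
          = TensorProduct.map (TensorProduct.map κ κ) κ ((w ⊗ₜ[ℂ] w') ⊗ₜ[ℂ] w'') := by simp
      rw [hy, YBL_apply, YBR_apply]
      simp only [f1, f2]
      have h := LinearMap.congr_fun hYYB ((w ⊗ₜ[ℂ] w') ⊗ₜ[ℂ] w'')
      simp only [LinearMap.comp_apply, LinearEquiv.coe_coe] at h
      exact congrArg _ h
    have hVVW : ∀ (v v' : V) (w : W),
        YBL Z ((ι v ⊗ₜ[ℂ] ι v') ⊗ₜ[ℂ] κ w) = YBR Z ((ι v ⊗ₜ[ℂ] ι v') ⊗ₜ[ℂ] κ w) := by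
      intro v v' w
      rw [YBL_apply, YBR_apply]
      simp only [LinearMap.rTensor_tmul, TensorProduct.assoc_tmul, LinearMap.lTensor_tmul,
        TensorProduct.assoc_symm_tmul, hZVV, hZVW, hZWV, hZWW]
      generalize X (v ⊗ₜ[ℂ] v') = t
      induction t using TensorProduct.induction_on with
      | zero => simp only [tmul_zero, zero_tmul, LinearMap.map_zero, LinearEquiv.map_zero]
      | tmul a b => simp [hZVV, hZVW, hZWV, hZWW]
      | add s t hs ht =>
        simp only [map_add, tmul_add, add_tmul, LinearMap.map_add, LinearEquiv.map_add,
          LinearMap.rTensor_tmul, hs, ht]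
    have hWWV : ∀ (w w' : W) (v : V),
        YBL Z ((κ w ⊗ₜ[ℂ] κ w') ⊗ₜ[ℂ] ι v) = YBR Z ((κ w ⊗ₜ[ℂ] κ w') ⊗ₜ[ℂ] ι v) := by
      intro w w' v
      rw [YBL_apply, YBR_apply]
      simp only [LinearMap.rTensor_tmul, TensorProduct.assoc_tmul, LinearMap.lTensor_tmul,
        TensorProduct.assoc_symm_tmul, hZVV, hZVW, hZWV, hZWW]
      generalize Y (w ⊗ₜ[ℂ] w') = t
      induction t using TensorProduct.induction_on with
      | zero => simp only [tmul_zero, zero_tmul, LinearMap.map_zero, LinearEquiv.map_zero]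
      | tmul a b => simp [hZVV, hZVW, hZWV, hZWW]
      | add s t hs ht =>
        simp only [map_add, tmul_add, add_tmul, LinearMap.map_add, LinearEquiv.map_add,
          LinearMap.rTensor_tmul, hs, ht]
    have hVWV : ∀ (v : V) (w : W) (v' : V),
        YBL Z ((ι v ⊗ₜ[ℂ] κ w) ⊗ₜ[ℂ] ι v') = YBR Z ((ι v ⊗ₜ[ℂ] κ w) ⊗ₜ[ℂ] ι v') := by
      intro v w v'
      rw [YBL_apply, YBR_apply]
      simp only [LinearMap.rTensor_tmul, TensorProduct.assoc_tmul, LinearMap.lTensor_tmul,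
        TensorProduct.assoc_symm_tmul, hZVV, hZVW, hZWV, hZWW]
      generalize X (v ⊗ₜ[ℂ] v') = t
      induction t using TensorProduct.induction_on with
      | zero => simp only [tmul_zero, zero_tmul, LinearMap.map_zero, LinearEquiv.map_zero]
      | tmul a b => simp [hZVV, hZVW, hZWV, hZWW]
      | add s t hs ht =>
        simp only [map_add, tmul_add, add_tmul, LinearMap.map_add, LinearEquiv.map_add,
          LinearMap.rTensor_tmul, hs, ht]
    have hWVW : ∀ (w : W) (v : V) (w' : W),
        YBL Z ((κ w ⊗ₜ[ℂ] ι v) ⊗ₜ[ℂ] κ w') = YBR Z ((κ w ⊗ₜ[ℂ] ι v) ⊗ₜ[ℂ] κ w') := by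
      intro w v w'
      rw [YBL_apply, YBR_apply]
      simp only [LinearMap.rTensor_tmul, TensorProduct.assoc_tmul, LinearMap.lTensor_tmul,
        TensorProduct.assoc_symm_tmul, hZVV, hZVW, hZWV, hZWW]
      generalize Y (w ⊗ₜ[ℂ] w') = t
      induction t using TensorProduct.induction_on with
      | zero => simp only [tmul_zero, zero_tmul, LinearMap.map_zero, LinearEquiv.map_zero]
      | tmul a b => simp [hZVV, hZVW, hZWV, hZWW]
      | add s t hs ht =>
        simp only [map_add, tmul_add, add_tmul, LinearMap.map_add, LinearEquiv.map_add,
          LinearMap.rTensor_tmul, hs, ht]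
    have hWVV : ∀ (w : W) (v v' : V),
        YBL Z ((κ w ⊗ₜ[ℂ] ι v) ⊗ₜ[ℂ] ι v') = YBR Z ((κ w ⊗ₜ[ℂ] ι v) ⊗ₜ[ℂ] ι v') := by
      intro w v v'
      rw [YBL_apply, YBR_apply]
      simp only [LinearMap.rTensor_tmul, TensorProduct.assoc_tmul, LinearMap.lTensor_tmul,
        TensorProduct.assoc_symm_tmul, hZVV, hZVW, hZWV, hZWW]
      generalize X (v ⊗ₜ[ℂ] v') = t
      induction t using TensorProduct.induction_on with
      | zero => simp only [tmul_zero, zero_tmul, LinearMap.map_zero, LinearEquiv.map_zero]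
      | tmul a b => simp [hZVV, hZVW, hZWV, hZWW]
      | add s t hs ht =>
        simp only [map_add, tmul_add, add_tmul, LinearMap.map_add, LinearEquiv.map_add,
          LinearMap.rTensor_tmul, hs, ht]
    have hVWW : ∀ (v : V) (w w' : W),
        YBL Z ((ι v ⊗ₜ[ℂ] κ w) ⊗ₜ[ℂ] κ w') = YBR Z ((ι v ⊗ₜ[ℂ] κ w) ⊗ₜ[ℂ] κ w') := by
      intro v w w'
      rw [YBL_apply, YBR_apply]
      simp only [LinearMap.rTensor_tmul, TensorProduct.assoc_tmul, LinearMap.lTensor_tmul,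
        TensorProduct.assoc_symm_tmul, hZVV, hZVW, hZWV, hZWW]
      generalize Y (w ⊗ₜ[ℂ] w') = t
      induction t using TensorProduct.induction_on with
      | zero => simp only [tmul_zero, zero_tmul, LinearMap.map_zero, LinearEquiv.map_zero]
      | tmul a b => simp [hZVV, hZVW, hZWV, hZWW]
      | add s t hs ht =>
        simp only [map_add, tmul_add, add_tmul, LinearMap.map_add, LinearEquiv.map_add,
          LinearMap.rTensor_tmul, hs, ht]
    rw [yangBaxter_iff]
    apply TensorProduct.ext'
    intro u r
    induction u using TensorProduct.induction_on with
    | zero => simp only [zero_tmul, LinearMap.map_zero]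
    | tmul p q =>
      rw [hsplit p, hsplit q, hsplit r]
      simp only [add_tmul, tmul_add, LinearMap.map_add]
      rw [hVVV, hVVW, hVWV, hVWW, hWVV, hWVW, hWWV, hWWW]
    | add a b ha hb =>
      simp only [add_tmul, LinearMap.map_add, ha, hb]
end

section
/- Let ζ: T → GL(V) be a representation with dim V = p, W a space of dimension q, E = V⊗W, π(t) = ζ(t)⊗id_W, and R the ε-signed V-flip on E ⊗ E. Then for every t ∈ T and n ≥ 1, Tr((π(t)⊗1^{⊗(n−1)}) R₁ R₂ ⋯ R_{n−1}) = ε^{n−1} · qⁿ · Tr(ζ(t)), where R_i acts on legs i, i+1 of E^{⊗n}. -/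
/-- The matrix of `π(t) ⊗ 1^{⊗(n−1)}` on `E^{⊗n}` (`E = V ⊗ W`), where
`π(t) = ζ(t) ⊗ id_W` acts on the first leg via a matrix `Z = ζ(t)` on the
`V`-component and as the identity on the `W`-component. -/
def Pmat (p q n : ℕ) (hn : 0 < n) (Z : Matrix (Fin p) (Fin p) ℂ) :
    Matrix (Fin n → Fin p × Fin q) (Fin n → Fin p × Fin q) ℂ :=
  fun f g =>
    if (∀ k : Fin n, k ≠ ⟨0, hn⟩ → f k = g k) ∧ (f ⟨0, hn⟩).2 = (g ⟨0, hn⟩).2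
      then Z (f ⟨0, hn⟩).1 (g ⟨0, hn⟩).1 else 0

def cyc (n m : ℕ) (k : Fin n) : Fin n :=
  if h : k.val + 1 < n ∧ k.val < m then ⟨k.val + 1, h.1⟩
  else if k.val = m then ⟨0, Nat.lt_of_le_of_lt (Nat.zero_le _) k.isLt⟩
  else k

lemma cyc_val (n m : ℕ) (k : Fin n) :
    (cyc n m k).val =
      if k.val + 1 < n ∧ k.val < m then k.val + 1 else if k.val = m then 0 else k.val := by
  unfold cyc
  split_ifs with h1 h2 <;> rfl

def phiV (p q n m : ℕ) (f : Fin n → Fin p × Fin q) : Fin n → Fin p × Fin q :=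
  fun k => ((f (cyc n m k)).1, (f k).2)

lemma phiV_zero (p q n : ℕ) (f : Fin n → Fin p × Fin q) : phiV p q n 0 f = f := by
  funext k
  have hc : cyc n 0 k = k := by
    apply Fin.ext
    rw [cyc_val]
    split_ifs <;> omega
  show ((f (cyc n 0 k)).1, (f k).2) = f k
  rw [hc]

lemma Rstep (p q n : ℕ) (ε : ℂ) (m : ℕ) (hm : m + 1 < n) (f g : Fin n → Fin p × Fin q) :
    Rmat p q n ε m (phiV p q n m f) g = if g = phiV p q n (m + 1) f then ε else 0 := by
  have hiff : ((∀ k : Fin n, ((phiV p q n m f) k).2 = (g k).2) ∧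
      (∀ k : Fin n, k.val ≠ m → k.val ≠ m + 1 → ((phiV p q n m f) k).1 = (g k).1) ∧
      (∀ k l : Fin n, k.val = m → l.val = m + 1 →
        ((phiV p q n m f) k).1 = (g l).1 ∧ ((phiV p q n m f) l).1 = (g k).1))
      ↔ g = phiV p q n (m + 1) f := by
    simp only [phiV]
    constructor
    · rintro ⟨hA, hB, hC⟩
      funext k
      have h2 : (g k).2 = (f k).2 := (hA k).symm
      have h1 : (g k).1 = (f (cyc n (m + 1) k)).1 := by
        by_cases hk : k.val < m
        · have e : cyc n (m + 1) k = cyc n m k := by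
            apply Fin.ext; simp only [cyc_val]; split_ifs <;> omega
          rw [e]
          exact (hB k (by omega) (by omega)).symm
        · by_cases hk2 : k.val = m
          · have hc := (hC k ⟨m + 1, hm⟩ hk2 rfl).2
            have e : cyc n (m + 1) k = cyc n m (⟨m + 1, hm⟩ : Fin n) := by
              apply Fin.ext; simp only [cyc_val, Fin.val_mk]
              have := k.isLt
              split_ifs <;> omega
            rw [e]
            exact hc.symm
          · by_cases hk3 : k.val = m + 1
            · have hc := (hC ⟨m, by omega⟩ k rfl hk3).1
              have e : cyc n (m + 1) k = cyc n m (⟨m, by omega⟩ : Fin n) := by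
                apply Fin.ext; simp only [cyc_val, Fin.val_mk]; split_ifs <;> omega
              rw [e]
              exact hc.symm
            · have e : cyc n (m + 1) k = cyc n m k := by
                apply Fin.ext; simp only [cyc_val]; split_ifs <;> omega
              rw [e]
              exact (hB k hk2 hk3).symm
      calc g k = ((g k).1, (g k).2) := rfl
        _ = ((f (cyc n (m + 1) k)).1, (f k).2) := by rw [h1, h2]
    · rintro rfl
      refine ⟨fun k => rfl, fun k hk hk' => ?_, fun k l hk hl => ⟨?_, ?_⟩⟩
      · have e : cyc n m k = cyc n (m + 1) k := by
          apply Fin.ext; simp only [cyc_val]; split_ifs <;> omega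
        rw [e]; rfl
      · have e : cyc n m k = cyc n (m + 1) l := by
          apply Fin.ext; simp only [cyc_val]
          have := l.isLt
          split_ifs <;> omega
        rw [e]; rfl
      · have e : cyc n m l = cyc n (m + 1) k := by
          apply Fin.ext; simp only [cyc_val]
          have := l.isLt
          split_ifs <;> omega
        rw [e]; rfl
  show (if _ then ε else 0) = _
  rw [if_congr hiff rfl rfl]

lemma Rprod (p q n : ℕ) (ε : ℂ) (m : ℕ) :
    ∀ (_ : m < n) (f g : Fin n → Fin p × Fin q),
      (((List.range m).map (Rmat p q n ε)).prod) f g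
        = if g = phiV p q n m f then ε ^ m else 0 := by
  induction m with
  | zero =>
    intro _ f g
    simp only [List.range_zero, List.map_nil, List.prod_nil, phiV_zero, pow_zero]
    rw [Matrix.one_apply]
    exact if_congr eq_comm rfl rfl
  | succ m ih =>
    intro hm f g
    rw [List.range_succ, List.map_append, List.prod_append, List.map_singleton,
      List.prod_singleton, Matrix.mul_apply]
    have : ∀ h, (((List.range m).map (Rmat p q n ε)).prod) f h
        = if h = phiV p q n m f then ε ^ m else 0 := ih (by omega) f
    simp only [this, ite_mul, zero_mul]
    rw [Finset.sum_ite_eq' Finset.univ (phiV p q n m f)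
      (fun h => ε ^ m * Rmat p q n ε m h g)]
    simp only [Finset.mem_univ, if_true]
    rw [Rstep p q n ε m hm f g]
    split_ifs <;> [rw [pow_succ]; ring]

lemma Pphi (p q n : ℕ) (hn2 : 2 ≤ n) (h0 : 0 < n) (Z : Matrix (Fin p) (Fin p) ℂ)
    (g : Fin n → Fin p × Fin q) :
    Pmat p q n h0 Z (phiV p q n (n - 1) g) g
      = if (∀ k, (g k).1 = (g ⟨0, h0⟩).1) then Z (g ⟨0, h0⟩).1 (g ⟨0, h0⟩).1 else 0 := by
  unfold Pmat
  by_cases hc : ∀ k, (g k).1 = (g ⟨0, h0⟩).1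
  · have hcond : (∀ k : Fin n, k ≠ ⟨0, h0⟩ → phiV p q n (n - 1) g k = g k) ∧
        ((phiV p q n (n - 1) g) ⟨0, h0⟩).2 = (g ⟨0, h0⟩).2 := by
      refine ⟨fun k _ => ?_, rfl⟩
      show ((g (cyc n (n - 1) k)).1, (g k).2) = g k
      rw [hc (cyc n (n - 1) k), ← hc k]
    rw [if_pos hcond, if_pos hc]
    show Z (g (cyc n (n - 1) ⟨0, h0⟩)).1 (g ⟨0, h0⟩).1 = _
    rw [hc (cyc n (n - 1) ⟨0, h0⟩)]
  · rw [if_neg hc, if_neg]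
    rintro ⟨h1, -⟩
    apply hc
    have key : ∀ d : ℕ, ∀ j (hj : j < n), 1 ≤ j → j + d = n - 1 →
        (g ⟨j, hj⟩).1 = (g ⟨0, h0⟩).1 := by
      intro d
      induction d with
      | zero =>
        intro j hj h1j hd
        have hne : (⟨j, hj⟩ : Fin n) ≠ ⟨0, h0⟩ := by
          simp only [ne_eq, Fin.mk.injEq]; omega
        have h1'' := congrArg Prod.fst (h1 _ hne)
        have h1' : (g (cyc n (n - 1) ⟨j, hj⟩)).1 = (g ⟨j, hj⟩).1 := h1''
        have e : cyc n (n - 1) ⟨j, hj⟩ = ⟨0, h0⟩ := by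
          apply Fin.ext; simp only [cyc_val, Fin.val_mk]; split_ifs <;> omega
        rw [e] at h1'
        exact h1'.symm
      | succ d ihd =>
        intro j hj h1j hd
        have hne : (⟨j, hj⟩ : Fin n) ≠ ⟨0, h0⟩ := by
          simp only [ne_eq, Fin.mk.injEq]; omega
        have h1'' := congrArg Prod.fst (h1 _ hne)
        have h1' : (g (cyc n (n - 1) ⟨j, hj⟩)).1 = (g ⟨j, hj⟩).1 := h1''
        have e : cyc n (n - 1) ⟨j, hj⟩ = ⟨j + 1, by omega⟩ := by
          apply Fin.ext; simp only [cyc_val, Fin.val_mk]; split_ifs <;> omega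
        rw [e] at h1'
        rw [← h1']
        exact ihd (j + 1) (by omega) (by omega) (by omega)
    intro k
    by_cases hk0 : k = ⟨0, h0⟩
    · rw [hk0]
    · have h1k : 1 ≤ k.val := by
        rcases Nat.eq_zero_or_pos k.val with h | h
        · exact absurd (Fin.ext h) hk0
        · exact h
      have := key (n - 1 - k.val) k.val k.isLt h1k (by omega)
      simpa using this

lemma sum_const_fiber (p q n : ℕ) (a : Fin p) (c : ℂ) :
    ∑ g : Fin n → Fin p × Fin q, (if (∀ k, (g k).1 = a) then c else 0) = (q : ℂ) ^ n * c := by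
  classical
  rw [← Finset.sum_filter, Finset.sum_const, nsmul_eq_mul]
  have hcard : (Finset.univ.filter fun g : Fin n → Fin p × Fin q => ∀ k, (g k).1 = a).card
      = q ^ n := by
    rw [← Fintype.card_subtype]
    have e : {g : Fin n → Fin p × Fin q // ∀ k, (g k).1 = a} ≃ (Fin n → Fin q) :=
      { toFun := fun g k => (g.1 k).2
        invFun := fun w => ⟨fun k => (a, w k), fun _ => rfl⟩
        left_inv := fun g => Subtype.ext (funext fun k => Prod.ext (g.2 k).symm rfl)
        right_inv := fun w => rfl }
    rw [Fintype.card_congr e]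
    simp [Fintype.card_fun]
  rw [hcard]
  push_cast
  ring

lemma ite_const_expand (p q n : ℕ) (h0 : 0 < n) (Z : Matrix (Fin p) (Fin p) ℂ)
    (g : Fin n → Fin p × Fin q) :
    (if (∀ k, (g k).1 = (g ⟨0, h0⟩).1) then Z (g ⟨0, h0⟩).1 (g ⟨0, h0⟩).1 else 0)
      = ∑ a : Fin p, if (∀ k, (g k).1 = a) then Z a a else 0 := by
  by_cases hc : ∀ k, (g k).1 = (g ⟨0, h0⟩).1
  · rw [if_pos hc]
    have hiff : ∀ a : Fin p, (∀ k, (g k).1 = a) ↔ a = (g ⟨0, h0⟩).1 :=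
      fun a => ⟨fun h => (h ⟨0, h0⟩).symm, fun h k => (hc k).trans h.symm⟩
    simp only [hiff]
    rw [Finset.sum_ite_eq' Finset.univ ((g ⟨0, h0⟩).1) (fun a => Z a a)]
    simp
  · rw [if_neg hc]
    symm
    apply Finset.sum_eq_zero
    intro a _
    rw [if_neg]
    intro h
    exact hc fun k => (h k).trans (h ⟨0, h0⟩).symm
/-- For a representation `ζ : T → GL(V)` with `dim V = p`, `dim W = q`,
`π(t) = ζ(t) ⊗ id_W` and `R` the `ε`-signed `V`-flip on `E ⊗ E`:
`Tr((π(t)⊗1^{⊗(n−1)}) R₁ R₂ ⋯ R_{n−1}) = ε^{n−1} qⁿ Tr(ζ(t))`. -/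
theorem stmt18 (T : Type*) [Group T] [Fintype T] (p q n : ℕ) (hn : 2 ≤ n)
    (ζ : T →* (Matrix (Fin p) (Fin p) ℂ)ˣ) (ε : ℂ) (hε : ε = 1 ∨ ε = -1) (t : T) :
    Matrix.trace (Pmat p q n (by omega) (ζ t : Matrix (Fin p) (Fin p) ℂ) *
        ((List.range (n - 1)).map (Rmat p q n ε)).prod)
      = ε ^ (n - 1) * (q : ℂ) ^ n * Matrix.trace (ζ t : Matrix (Fin p) (Fin p) ℂ) := by
  have h0 : 0 < n := by omega
  set Z := (ζ t : Matrix (Fin p) (Fin p) ℂ) with hZ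
  have hC : ∀ g f : Fin n → Fin p × Fin q,
      (((List.range (n - 1)).map (Rmat p q n ε)).prod) g f
        = if f = phiV p q n (n - 1) g then ε ^ (n - 1) else 0 :=
    fun g f => Rprod p q n ε (n - 1) (by omega) g f
  rw [Matrix.trace]
  simp only [Matrix.diag_apply, Matrix.mul_apply, hC, mul_ite, mul_zero]
  rw [Finset.sum_comm]
  simp only [Finset.sum_ite_eq', Finset.mem_univ, if_true]
  have hP : ∀ g : Fin n → Fin p × Fin q,
      Pmat p q n h0 Z (phiV p q n (n - 1) g) g
        = if (∀ k, (g k).1 = (g ⟨0, h0⟩).1) then Z (g ⟨0, h0⟩).1 (g ⟨0, h0⟩).1 else 0 :=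
    fun g => Pphi p q n hn h0 Z g
  simp only [hP]
  have hsum : ∑ g : Fin n → Fin p × Fin q,
      (if (∀ k, (g k).1 = (g ⟨0, h0⟩).1) then Z (g ⟨0, h0⟩).1 (g ⟨0, h0⟩).1 else 0)
      = (q : ℂ) ^ n * Matrix.trace Z := by
    simp only [ite_const_expand p q n h0 Z]
    rw [Finset.sum_comm]
    simp only [sum_const_fiber]
    rw [Matrix.trace, ← Finset.mul_sum]
    rfl
  rw [← Finset.sum_mul, hsum]
  ring
end
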